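/- Let n ≥ 2 and let H₁,…,Hₙ, Y₁,…,Yₙ be an indecomposable representation of 𝔟ⁿ on ℂ³ with each H_i diagonalizable. Suppose Y₁ ≠ 0 and that the restriction to the first factor, i.e., the pair (H₁, Y₁), is a decomposable representation of 𝔟 on ℂ³. Then there exists an index j ∈ {2,…,n} such that: (i) the restriction to the factors 1 and j is multiplicity-free (every joint eigenspace {v ∈ ℂ³ : H₁v = θ₁v, H_jv = θ₂v} is at most one-dimensional) and the representation of 𝔟² given by H₁, H_j, Y₁, Y_j on ℂ³ is indecomposable; (ii) Y_i = 0 for every i ∉ {1, j}; and (iii) for every i ∉ {1, j} there is a scalar λ_i ∈ ℂ with H_i = λ_i·I₃. -/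

import Mathlib

/-- A subspace invariant under both operators of a single pair `(T, S)`. -/
def InvariantPair {r : ℕ} (T S : Module.End ℂ (Fin r → ℂ))
    (W : Submodule ℂ (Fin r → ℂ)) : Prop :=
  (∀ x ∈ W, T x ∈ W) ∧ (∀ x ∈ W, S x ∈ W)

/-!
Diagonalize the commuting `H i` simultaneously in a basis `b` of `ℂ³`, with weights
`w k : ι → ℂ`. The relations force `Y i` to lower weights by the unit vector `eᵢ`, so a
nonzero matrix entry of `Y i` is an edge between two basis vectors whose weights differ by `eᵢ`.

If two weights coincide, every edge joins that two-dimensional weight space to the third basis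
vector, along a single `Y i`; a transvection inside the repeated weight space produces a basis
vector with no edges at all, and the representation decomposes.

If the weights are distinct, they separate the basis vectors, so every invariant decomposition is
spanned by basis vectors and decomposability means that the edge graph is disconnected.
Indecomposability then gives an edge of `Y 0` and an edge of some `Y j` that together connect the
three vectors. All other coordinates of the weights are constant, which makes `Y i = 0` and `H i`
scalar for `i ≠ 0, j`; the two edges keep the restriction to `{0, j}` connected, its weights still
separate the basis, and `j ≠ 0` because the restriction to the first factor decomposes.
-/

open Module Submodule

theorem Fin.eq_or_eq_or_eq_of_ne {x y z : Fin 3} (hxy : x ≠ y) (hxz : x ≠ z) (hyz : y ≠ z)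
    (t : Fin 3) : t = x ∨ t = y ∨ t = z := by
  revert x y z t
  decide

theorem Fin.exists_ne_ne (x y : Fin 3) : ∃ z, z ≠ x ∧ z ≠ y := by
  revert x y
  decide

theorem Fin.eq_or_eq_or_eq_or_eq_of_ne {p q k l : Fin 3} (hpq : p ≠ q) (hkl : k ≠ l) :
    k = p ∨ k = q ∨ l = p ∨ l = q := by
  revert p q k l
  decide

theorem Fin.apply_eq_of_apply_eq_of_apply_eq {α : Sort*} (f : Fin 3 → α) {x y z t : Fin 3}
    (hxy : x ≠ y) (hzx : z ≠ x) (hzy : z ≠ y) (ht : t = x ∨ t = y) (hf : f x = f y)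
    (hf' : f z = f t) (u : Fin 3) : f u = f x := by
  have hft : f t = f x := by rcases ht with rfl | rfl <;> simp [hf]
  rcases Fin.eq_or_eq_or_eq_of_ne hxy hzx.symm hzy.symm u with rfl | rfl | rfl
  exacts [rfl, hf.symm, hf'.trans hft]

namespace Pi

variable {ι K : Type*} [DecidableEq ι] [Field K]

theorem single_one_left_injective : Function.Injective fun i : ι => (Pi.single i 1 : ι → K) :=
  fun i j h => by_contra fun hij => by simpa [hij] using congrFun h i

theorem single_one_add_single_one_ne_zero [CharZero K] (i j : ι) :
    (Pi.single i 1 + Pi.single j 1 : ι → K) ≠ 0 := fun h => by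
  rcases eq_or_ne j i with rfl | hji
  · simpa [← two_mul] using congrFun h j
  · simpa [hji] using congrFun h i

end Pi

namespace Module.Basis

variable {ι K V : Type*} [Field K] [AddCommGroup V] [Module K V] (b : Basis ι K V)

theorem repr_apply_of_apply_eq_smul {T : End K V} {d : ι → K} (hT : ∀ k, T (b k) = d k • b k)
    (x : V) (k : ι) : b.repr (T x) k = d k * b.repr x k := by
  have : (b.coord k).comp T = d k • b.coord k :=
    b.ext fun l => by by_cases h : l = k <;> simp [hT, h]
  simpa using congr($this x)

theorem eq_repr_smul_of_repr_eq_zero {x : V} {k : ι} (h : ∀ l, l ≠ k → b.repr x l = 0) :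
    x = b.repr x k • b k :=
  b.ext_elem fun l => by by_cases hl : l = k <;> simp [hl, h]

theorem exists_repr_ne_zero_of_ne_zero {T : End K V} (hT : T ≠ 0) :
    ∃ k l, b.repr (T (b l)) k ≠ 0 := by
  by_contra! h
  exact hT (b.ext fun l => b.ext_elem fun k => by simp [h])

theorem isCompl_span_image_compl (s : Set ι) :
    IsCompl (span K (b '' s)) (span K (b '' sᶜ)) := by
  refine ⟨disjoint_def.2 fun x h₁ h₂ => ?_, ?_⟩
  · have h := Set.subset_inter (b.mem_span_image.1 h₁) (b.mem_span_image.1 h₂)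
    rw [Set.inter_compl_self, Set.subset_empty_iff, Finset.coe_eq_empty,
      Finsupp.support_eq_empty] at h
    simpa using congr(b.repr.symm $h)
  · rw [codisjoint_iff, ← span_union, ← Set.image_union, Set.union_compl_self, Set.image_univ,
      b.span_eq]

theorem span_image_ne_bot {s : Set ι} (hs : s.Nonempty) : span K (b '' s) ≠ ⊥ := by
  obtain ⟨k, hk⟩ := hs
  exact (Submodule.ne_bot_iff _).2 ⟨b k, subset_span ⟨k, hk, rfl⟩, b.ne_zero k⟩

theorem finrank_eigenspace_inf_eigenspace_le_one [FiniteDimensional K V] {T₁ T₂ : End K V}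
    {d₁ d₂ : ι → K} (h₁ : ∀ k, T₁ (b k) = d₁ k • b k) (h₂ : ∀ k, T₂ (b k) = d₂ k • b k)
    (hd : Function.Injective fun k => (d₁ k, d₂ k)) (θ₁ θ₂ : K) :
    finrank K ↥(T₁.eigenspace θ₁ ⊓ T₂.eigenspace θ₂) ≤ 1 := by
  set s := {k | d₁ k = θ₁ ∧ d₂ k = θ₂}
  have hle : T₁.eigenspace θ₁ ⊓ T₂.eigenspace θ₂ ≤ span K (b '' s) := by
    rintro x ⟨hx₁, hx₂⟩
    refine b.mem_span_image.2 fun k hk => ?_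
    have hk : b.repr x k ≠ 0 := Finsupp.mem_support_iff.1 hk
    have e₁ := b.repr_apply_of_apply_eq_smul h₁ x k
    have e₂ := b.repr_apply_of_apply_eq_smul h₂ x k
    rw [End.mem_eigenspace_iff.1 hx₁, map_smul, Finsupp.smul_apply, smul_eq_mul] at e₁
    rw [End.mem_eigenspace_iff.1 hx₂, map_smul, Finsupp.smul_apply, smul_eq_mul] at e₂
    exact ⟨(mul_right_cancel₀ hk e₁).symm, (mul_right_cancel₀ hk e₂).symm⟩
  have hs : s.Subsingleton := fun k hk l hl => hd (by simp [hk.1, hk.2, hl.1, hl.2])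
  rcases hs.eq_empty_or_singleton with h | ⟨k, h⟩
  · rw [h, Set.image_empty, span_empty] at hle
    exact (Submodule.finrank_mono hle).trans (by simp)
  · rw [h, Set.image_singleton] at hle
    exact (Submodule.finrank_mono hle).trans (finrank_span_singleton (b.ne_zero k)).le

/-- `s` cuts the matrix of `T` in the basis `b` into two diagonal blocks. -/
def Reduces (s : Set ι) (T : End K V) : Prop :=
  ∀ k l, b.repr (T (b l)) k ≠ 0 → (k ∈ s ↔ l ∈ s)

section Reduces

variable {b}

theorem reduces_of_apply_eq_smul {T : End K V} {d : ι → K} (hT : ∀ k, T (b k) = d k • b k)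
    (s : Set ι) : b.Reduces s T := by
  intro k l hkl
  obtain rfl : k = l := by by_contra h; simp [hT, Ne.symm h] at hkl
  rfl

theorem Reduces.compl {s : Set ι} {T : End K V} (h : b.Reduces s T) : b.Reduces sᶜ T :=
  fun k l hkl => not_congr (h k l hkl)

theorem Reduces.mapsTo {s : Set ι} {T : End K V} (h : b.Reduces s T) :
    ∀ x ∈ span K (b '' s), T x ∈ span K (b '' s) := by
  suffices span K (b '' s) ≤ (span K (b '' s)).comap T from this
  refine span_le.2 ?_
  rintro _ ⟨l, hl, rfl⟩
  exact b.mem_span_image.2 fun k hk => (h k l (Finsupp.mem_support_iff.1 hk)).2 hl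

end Reduces

section Separating

variable [Fintype ι] {κ : Type*} {T : κ → End K V} {d : ι → κ → K}

theorem mem_of_repr_ne_zero (hT : ∀ a k, T a (b k) = d k a • b k) (hd : Function.Injective d)
    {W : Submodule K V} (hW : ∀ a, ∀ x ∈ W, T a x ∈ W) {x : V} (hx : x ∈ W) {k : ι}
    (hk : b.repr x k ≠ 0) : b k ∈ W := by
  classical
  -- Kill the other coordinates one at a time with the operators `T a - d l a`.
  have key : ∀ s : Finset ι, k ∉ s → ∃ y ∈ W, b.repr y k ≠ 0 ∧ ∀ l ∈ s, b.repr y l = 0 := by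
    intro s
    induction s using Finset.induction_on with
    | empty => exact fun _ => ⟨x, hx, hk, by simp⟩
    | insert l s hl ih =>
      intro hks
      obtain ⟨y, hyW, hyk, hys⟩ := ih fun h => hks (Finset.mem_insert_of_mem h)
      obtain ⟨a, ha⟩ : ∃ a, d k a ≠ d l a := by
        by_contra! h
        exact hks (hd (funext h) ▸ Finset.mem_insert_self l s)
      refine ⟨T a y - d l a • y, sub_mem (hW a y hyW) (W.smul_mem _ hyW), ?_, ?_⟩
      · simpa [b.repr_apply_of_apply_eq_smul (hT a), ← sub_mul] using
          mul_ne_zero (sub_ne_zero.2 ha) hyk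
      · intro m hm
        rcases Finset.mem_insert.1 hm with rfl | hm
        · simp [b.repr_apply_of_apply_eq_smul (hT a)]
        · simp [b.repr_apply_of_apply_eq_smul (hT a), hys m hm]
  obtain ⟨y, hyW, hyk, hy⟩ := key (Finset.univ.erase k) (Finset.notMem_erase k _)
  have hy' : y = b.repr y k • b k :=
    b.eq_repr_smul_of_repr_eq_zero fun l hl => hy l (Finset.mem_erase.2 ⟨hl, Finset.mem_univ l⟩)
  rw [← inv_smul_smul₀ hyk (b k), ← hy']
  exact W.smul_mem _ hyW

theorem exists_mem_of_ne_bot (hT : ∀ a k, T a (b k) = d k a • b k) (hd : Function.Injective d)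
    {W : Submodule K V} (hW : ∀ a, ∀ x ∈ W, T a x ∈ W) (hW0 : W ≠ ⊥) : ∃ k, b k ∈ W := by
  obtain ⟨x, hx, hx0⟩ := W.exists_mem_ne_zero_of_ne_bot hW0
  obtain ⟨k, hk⟩ : ∃ k, b.repr x k ≠ 0 := by
    by_contra! h
    exact hx0 (b.ext_elem fun k => by simp [h])
  exact ⟨k, b.mem_of_repr_ne_zero hT hd hW hx hk⟩

theorem mem_or_mem_of_isCompl (hT : ∀ a k, T a (b k) = d k a • b k)
    (hd : Function.Injective d) {W₁ W₂ : Submodule K V} (hW : IsCompl W₁ W₂)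
    (hW₁ : ∀ a, ∀ x ∈ W₁, T a x ∈ W₁) (hW₂ : ∀ a, ∀ x ∈ W₂, T a x ∈ W₂) (k : ι) :
    b k ∈ W₁ ∨ b k ∈ W₂ := by
  obtain ⟨y, hy, z, hz, hyz⟩ := Submodule.mem_sup.1 (hW.sup_eq_top ▸ mem_top : b k ∈ W₁ ⊔ W₂)
  have : b.repr y k + b.repr z k = 1 := by simpa using congr(b.repr $hyz k)
  by_cases hyk : b.repr y k = 0
  · exact .inr (b.mem_of_repr_ne_zero hT hd hW₂ hz (by simp_all))
  · exact .inl (b.mem_of_repr_ne_zero hT hd hW₁ hy hyk)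

theorem reduces_setOf_mem (hT : ∀ a k, T a (b k) = d k a • b k) (hd : Function.Injective d)
    {W₁ W₂ : Submodule K V} (hW : IsCompl W₁ W₂) (hW₁ : ∀ a, ∀ x ∈ W₁, T a x ∈ W₁)
    (hW₂ : ∀ a, ∀ x ∈ W₂, T a x ∈ W₂) {Y : End K V} (hY₁ : ∀ x ∈ W₁, Y x ∈ W₁)
    (hY₂ : ∀ x ∈ W₂, Y x ∈ W₂) : b.Reduces {k | b k ∈ W₁} Y := by
  have not_mem_of_mem₂ {k : ι} (hk : b k ∈ W₂) : b k ∉ W₁ := fun hk₁ =>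
    b.ne_zero k (disjoint_def.1 hW.disjoint _ hk₁ hk)
  intro k l hkl
  rcases b.mem_or_mem_of_isCompl hT hd hW hW₁ hW₂ l with hl | hl
  · exact iff_of_true (b.mem_of_repr_ne_zero hT hd hW₁ (hY₁ _ hl) hkl) hl
  · exact iff_of_false (not_mem_of_mem₂ (b.mem_of_repr_ne_zero hT hd hW₂ (hY₂ _ hl) hkl))
      (not_mem_of_mem₂ hl)

end Separating

noncomputable def transvect {a c : ι} (hac : a ≠ c) (t : K) : Basis ι K V :=
  b.map (LinearEquiv.transvection (f := b.coord a) (v := t • b c) (by simp [hac]))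

variable {b} [DecidableEq ι]

theorem transvect_apply {a c : ι} (hac : a ≠ c) (t : K) (k : ι) :
    b.transvect hac t k = if k = a then b a + t • b c else b k := by
  split_ifs with h <;> simp [transvect, LinearMap.transvection.apply, h]

theorem repr_transvect_apply {a c : ι} (hac : a ≠ c) (t : K) (x : V) (k : ι) :
    (b.transvect hac t).repr x k = b.repr x k - if k = c then t * b.repr x a else 0 := by
  split_ifs with h
  · simp [transvect, LinearEquiv.transvection, LinearMap.transvection.apply, h]
    ring
  · simp [transvect, LinearEquiv.transvection, LinearMap.transvection.apply, h]

theorem apply_transvect_eq_smul {a c : ι} (hac : a ≠ c) (t : K) {T : End K V} {d : ι → K}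
    (hT : ∀ k, T (b k) = d k • b k) (hd : d a = d c) (k : ι) :
    T (b.transvect hac t k) = d k • b.transvect hac t k := by
  rw [transvect_apply]
  split_ifs with h
  · rw [map_add, map_smul, hT, hT, h, hd, smul_add, smul_comm]
  · exact hT k

end Module.Basis

namespace Module.End

variable {K V : Type*} [Field K] [AddCommGroup V] [Module K V] [FiniteDimensional K V]

theorem maxGenEigenspace_eq_eigenspace_of_iSup_eigenspace_eq_top {f : End K V}
    (hf : ⨆ μ, f.eigenspace μ = ⊤) (μ : K) : f.maxGenEigenspace μ = f.eigenspace μ := by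
  refine le_antisymm ?_ (f.genEigenspace μ |>.mono le_top)
  calc f.maxGenEigenspace μ = f.maxGenEigenspace μ ⊓ ⨆ ν, f.genEigenspace ν 1 := by
        rw [show ⨆ ν, f.genEigenspace ν 1 = ⊤ from hf, inf_top_eq]
    _ = ⨆ ν, f.maxGenEigenspace μ ⊓ f.genEigenspace ν 1 :=
        Submodule.inf_iSup_genEigenspace (fun _ hx => mapsTo_maxGenEigenspace_of_comm rfl μ hx) 1
    _ ≤ f.eigenspace μ := iSup_le fun ν => by
        rcases eq_or_ne ν μ with rfl | h
        · exact inf_le_right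
        · simp [(f.disjoint_genEigenspace h.symm ⊤ 1).eq_bot]

theorem exists_basis_apply_eq_smul {ι : Type*} (T : ι → End K V)
    (hT : Pairwise fun i j => Commute (T i) (T j)) (hdiag : ∀ i, ⨆ μ, (T i).eigenspace μ = ⊤) :
    ∃ (b : Basis (Fin (finrank K V)) K V) (w : Fin (finrank K V) → ι → K),
      ∀ k i, T i (b k) = w k i • b k := by
  have hmax i := maxGenEigenspace_eq_eigenspace_of_iSup_eigenspace_eq_top (hdiag i)
  have htop : ⨆ χ : ι → K, ⨅ i, (T i).eigenspace (χ i) = ⊤ := by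
    simpa only [hmax] using
      iSup_iInf_maxGenEigenspace_eq_top_of_iSup_maxGenEigenspace_eq_top_of_commute T hT
        fun i => by simpa only [hmax] using hdiag i
  have hspan : ⊤ ≤ span K {x | ∃ χ : ι → K, ∀ i, T i x = χ i • x} := by
    rw [← htop]
    exact iSup_le fun χ x hx => subset_span ⟨χ, fun i => mem_eigenspace_iff.1 ((mem_iInf _).1 hx i)⟩
  let b₀ := Basis.ofSpan hspan
  let b := b₀.reindex (b₀.indexEquiv (finBasis K V))
  choose w hw using fun k => Basis.ofSpan_subset hspan ⟨_, (b₀.reindex_apply _ k).symm⟩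
  exact ⟨b, w, hw⟩

end Module.End

section Weights

variable {ι κ K V : Type*} [Field K] [AddCommGroup V] [Module K V]
  {H Y : ι → End K V} {b : Basis κ K V} {w : κ → ι → K}

theorem apply_apply_eq_sub_single_smul [DecidableEq ι]
    (hHY : ∀ i j, i ≠ j → Commute (H i) (Y j)) (hrel : ∀ i, H i * Y i - Y i * H i = -Y i)
    {χ : ι → K} {v : V} (hv : ∀ t, H t v = χ t • v) (i t : ι) :
    H t (Y i v) = (χ - Pi.single i 1 : ι → K) t • Y i v := by
  rcases eq_or_ne t i with rfl | h
  · have := congr($(hrel t) v)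
    simp only [LinearMap.sub_apply, End.mul_apply, LinearMap.neg_apply, hv, map_smul] at this
    simp [sub_smul, sub_eq_iff_eq_add.1 this, neg_add_eq_sub]
  · rw [← End.mul_apply, (hHY t i h).eq, End.mul_apply, hv, map_smul]
    simp [h]

theorem weight_eq_of_repr_ne_zero (hw : ∀ k i, H i (b k) = w k i • b k) {χ : ι → K} {x : V}
    (hx : ∀ t, H t x = χ t • x) {k : κ} (hk : b.repr x k ≠ 0) : w k = χ := by
  funext t
  have := b.repr_apply_of_apply_eq_smul (fun k => hw k t) x k
  rw [hx, map_smul, Finsupp.smul_apply, smul_eq_mul] at this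
  exact (mul_right_cancel₀ hk this).symm

theorem eq_repr_smul_of_weight (hw : ∀ k i, H i (b k) = w k i • b k) {χ : ι → K} {x : V}
    (hx : ∀ t, H t x = χ t • x) {r : κ} (hr : ∀ k, w k = χ → k = r) : x = b.repr x r • b r :=
  b.eq_repr_smul_of_repr_eq_zero fun _ hl => by_contra fun hk =>
    hl (hr _ (weight_eq_of_repr_ne_zero hw hx hk))

theorem eq_zero_of_forall_weight_ne (hw : ∀ k i, H i (b k) = w k i • b k) {χ : ι → K} {x : V}
    (hx : ∀ t, H t x = χ t • x) (hχ : ∀ k, w k ≠ χ) : x = 0 :=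
  b.ext_elem fun k => by_contra fun hk => hχ k (weight_eq_of_repr_ne_zero hw hx (by simpa using hk))

structure IsWeightBasis (H Y : ι → End K V) (b : Basis κ K V) (w : κ → ι → K) : Prop where
  commute : ∀ i j, i ≠ j → Commute (H i) (Y j)
  lie : ∀ i, H i * Y i - Y i * H i = -Y i
  apply_basis : ∀ k i, H i (b k) = w k i • b k

namespace IsWeightBasis

theorem transvect (hb : IsWeightBasis H Y b w) {a c : κ} (hac : a ≠ c) (hw : w a = w c) (t : K) :
    IsWeightBasis H Y (b.transvect hac t) w := by
  classical
  exact ⟨hb.commute, hb.lie, fun k i =>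
    Basis.apply_transvect_eq_smul hac t (fun k => hb.apply_basis k i) (congrFun hw i) k⟩

variable [DecidableEq ι]

theorem weight_eq_sub_single_of_repr_ne_zero (hb : IsWeightBasis H Y b w) {i : ι} {k l : κ}
    (h : b.repr (Y i (b l)) k ≠ 0) : w k = w l - Pi.single i 1 :=
  weight_eq_of_repr_ne_zero hb.apply_basis
    (apply_apply_eq_sub_single_smul hb.commute hb.lie (hb.apply_basis l) i) h

theorem weight_apply_eq_of_repr_ne_zero (hb : IsWeightBasis H Y b w) {i i' : ι} {k l : κ}
    (h : b.repr (Y i' (b l)) k ≠ 0) (hi : i ≠ i') : w k i = w l i := by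
  simpa [hi] using congrFun (hb.weight_eq_sub_single_of_repr_ne_zero h) i

theorem ne_of_repr_ne_zero (hb : IsWeightBasis H Y b w) {i : ι} {k l : κ}
    (h : b.repr (Y i (b l)) k ≠ 0) : k ≠ l := by
  rintro rfl
  simpa using sub_eq_self.1 (hb.weight_eq_sub_single_of_repr_ne_zero h).symm

theorem eq_zero_of_weight_apply_eq (hb : IsWeightBasis H Y b w) {i : ι}
    (hi : ∀ k l, w k i = w l i) : Y i = 0 :=
  b.ext fun l => b.ext_elem fun k => by_contra fun h => by
    have := congrFun (hb.weight_eq_sub_single_of_repr_ne_zero (by simpa using h)) i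
    simpa using sub_eq_self.1 ((hi k l).symm.trans this).symm

end IsWeightBasis

end Weights

def DecomposableOn {ι : Type*} {N : ℕ} (H Y : ι → End ℂ (Fin N → ℂ)) (S : Set ι) : Prop :=
  ∃ W₁ W₂ : Submodule ℂ (Fin N → ℂ), W₁ ≠ ⊥ ∧ W₂ ≠ ⊥ ∧ IsCompl W₁ W₂ ∧
    (∀ i ∈ S, InvariantPair (H i) (Y i) W₁) ∧ (∀ i ∈ S, InvariantPair (H i) (Y i) W₂)

section Decomposition

variable {ι κ : Type*} {N : ℕ} {H Y : ι → End ℂ (Fin N → ℂ)} {S : Set ι}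
  {b : Basis κ ℂ (Fin N → ℂ)} {w : κ → ι → ℂ}

theorem decomposableOn_of_reduces (hw : ∀ k i, H i (b k) = w k i • b k) {s : Set κ}
    (hs : s.Nonempty) (hsc : sᶜ.Nonempty) (hY : ∀ i ∈ S, b.Reduces s (Y i)) :
    DecomposableOn H Y S :=
  ⟨_, _, b.span_image_ne_bot hs, b.span_image_ne_bot hsc, b.isCompl_span_image_compl s,
    fun i hi => ⟨(Basis.reduces_of_apply_eq_smul (fun k => hw k i) s).mapsTo, (hY i hi).mapsTo⟩,
    fun i hi => ⟨(Basis.reduces_of_apply_eq_smul (fun k => hw k i) sᶜ).mapsTo,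
      (hY i hi).compl.mapsTo⟩⟩

theorem DecomposableOn.exists_reduces [Fintype κ] (hw : ∀ k i, H i (b k) = w k i • b k)
    (hsep : Function.Injective fun k (i : S) => w k i) (h : DecomposableOn H Y S) :
    ∃ s : Set κ, s.Nonempty ∧ sᶜ.Nonempty ∧ ∀ i ∈ S, b.Reduces s (Y i) := by
  obtain ⟨W₁, W₂, h₁, h₂, hW, hinv₁, hinv₂⟩ := h
  have hT : ∀ (i : S) k, H i (b k) = w k i • b k := fun i k => hw k i
  have hH₁ : ∀ i : S, ∀ x ∈ W₁, H i x ∈ W₁ := fun i => (hinv₁ i i.2).1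
  have hH₂ : ∀ i : S, ∀ x ∈ W₂, H i x ∈ W₂ := fun i => (hinv₂ i i.2).1
  obtain ⟨k₁, hk₁⟩ := b.exists_mem_of_ne_bot hT hsep hH₁ h₁
  obtain ⟨k₂, hk₂⟩ := b.exists_mem_of_ne_bot hT hsep hH₂ h₂
  exact ⟨{k | b k ∈ W₁}, ⟨k₁, hk₁⟩,
    ⟨k₂, fun hk => b.ne_zero k₂ (disjoint_def.1 hW.disjoint _ hk hk₂)⟩,
    fun i hi => b.reduces_setOf_mem hT hsep hW hH₁ hH₂ (hinv₁ i hi).2 (hinv₂ i hi).2⟩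

theorem decomposableOn_univ_of_isolated [Nontrivial κ] (hw : ∀ k i, H i (b k) = w k i • b k)
    (k : κ) (hout : ∀ i, Y i (b k) = 0) (hin : ∀ i l, b.repr (Y i (b l)) k = 0) :
    DecomposableOn H Y Set.univ := by
  obtain ⟨l, hl⟩ := exists_ne k
  refine decomposableOn_of_reduces hw (Set.singleton_nonempty k) ⟨l, hl⟩ fun i _ m n hmn => ?_
  have hm : m ≠ k := by rintro rfl; exact hmn (hin i n)
  have hn : n ≠ k := by rintro rfl; exact hmn (by simp [hout])
  simp [hm, hn]

theorem IsWeightBasis.exists_repr_ne_zero_of_not_decomposableOn [DecidableEq ι] [Nontrivial κ]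
    (hb : IsWeightBasis H Y b w) (hindec : ¬DecomposableOn H Y Set.univ) (r : κ) :
    ∃ j l, l ≠ r ∧ (b.repr (Y j (b l)) r ≠ 0 ∨ b.repr (Y j (b r)) l ≠ 0) := by
  by_contra! h
  refine hindec (decomposableOn_univ_of_isolated hb.apply_basis r (fun i => ?_) fun i l => ?_)
  · refine b.ext_elem fun l => by_contra fun hl => ?_
    rw [map_zero, Finsupp.zero_apply] at hl
    exact hl (h i l (hb.ne_of_repr_ne_zero hl) |>.2)
  · by_contra hl
    exact hl (h i l (hb.ne_of_repr_ne_zero hl).symm |>.1)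

end Decomposition

section RepeatedWeight

variable {ι : Type*} [DecidableEq ι] {N : ℕ} {H Y : ι → End ℂ (Fin N → ℂ)}
  {b : Basis (Fin 3) ℂ (Fin N → ℂ)} {w : Fin 3 → ι → ℂ}

theorem decomposableOn_univ_of_repr_ne_zero_of_source_weight_eq (hb : IsWeightBasis H Y b w)
    {p q r : Fin 3} {i₀ : ι} (hpq : p ≠ q) (hwpq : w p = w q)
    (hedge : b.repr (Y i₀ (b p)) r ≠ 0) : DecomposableOn H Y Set.univ := by
  have he (i : ι) : (Pi.single i 1 : ι → ℂ) ≠ 0 := Pi.single_ne_zero_iff.2 one_ne_zero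
  have hr : w r = w p - Pi.single i₀ 1 := hb.weight_eq_sub_single_of_repr_ne_zero hedge
  have hrp : r ≠ p := hb.ne_of_repr_ne_zero hedge
  have hrq : r ≠ q := by
    rintro rfl
    exact he i₀ (by linear_combination hr + hwpq)
  have hcover := Fin.eq_or_eq_or_eq_of_ne hpq hrp.symm hrq.symm
  have hwk (k : Fin 3) : w k = w p ∨ w k = w p - Pi.single i₀ 1 := by
    rcases hcover k with rfl | rfl | rfl
    exacts [.inl rfl, .inl hwpq.symm, .inr hr]
  have honly (k : Fin 3) (hk : w k = w p - Pi.single i₀ 1) : k = r := by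
    rcases hwk k with h | h
    · exact absurd (by linear_combination hk - h) (he i₀)
    · rcases hcover k with rfl | rfl | rfl
      exacts [absurd (by linear_combination h) (he i₀),
        absurd (by linear_combination h + hwpq) (he i₀), rfl]
  have hYp := eq_repr_smul_of_weight hb.apply_basis
    (apply_apply_eq_sub_single_smul hb.commute hb.lie (hb.apply_basis p) i₀) honly
  have hYq := eq_repr_smul_of_weight hb.apply_basis
    (apply_apply_eq_sub_single_smul hb.commute hb.lie (hb.apply_basis q) i₀) (hwpq ▸ honly)
  set c := b.repr (Y i₀ (b p)) r
  set d := b.repr (Y i₀ (b q)) r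
  -- In the new basis `b q - (d / c) • b p` is killed by every `Y i`.
  have hb' := hb.transvect hpq.symm hwpq.symm (-d / c)
  refine decomposableOn_univ_of_isolated hb'.apply_basis q (fun i => ?_) (fun i l => ?_)
  · rcases eq_or_ne i i₀ with rfl | hi
    · rw [Basis.transvect_apply, if_pos rfl, map_add, map_smul, hYp, hYq, smul_smul, ← add_smul,
        div_mul_cancel₀ _ hedge, add_neg_cancel, zero_smul]
    · refine eq_zero_of_forall_weight_ne hb'.apply_basis
        (apply_apply_eq_sub_single_smul hb.commute hb.lie (hb'.apply_basis q) i) fun k hk => ?_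
      rcases hwk k with h | h
      · exact he i (by linear_combination hk - h - hwpq)
      · exact hi (Pi.single_one_left_injective (by linear_combination hk - h - hwpq))
  · by_contra hne
    have hk := hb'.weight_eq_sub_single_of_repr_ne_zero hne
    rcases hwk l with h | h
    · exact he i (by linear_combination hk + h + hwpq)
    · exact Pi.single_one_add_single_one_ne_zero i₀ i (by linear_combination hk + h + hwpq)

theorem decomposableOn_univ_of_repr_ne_zero_of_target_weight_eq (hb : IsWeightBasis H Y b w)
    {p q r : Fin 3} {i₀ : ι} (hpq : p ≠ q) (hwpq : w p = w q)
    (hedge : b.repr (Y i₀ (b r)) p ≠ 0) : DecomposableOn H Y Set.univ := by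
  have he (i : ι) : (Pi.single i 1 : ι → ℂ) ≠ 0 := Pi.single_ne_zero_iff.2 one_ne_zero
  have hp : w p = w r - Pi.single i₀ 1 := hb.weight_eq_sub_single_of_repr_ne_zero hedge
  have hpr : p ≠ r := hb.ne_of_repr_ne_zero hedge
  have hqr : q ≠ r := by
    rintro rfl
    exact he i₀ (by linear_combination hp - hwpq)
  have hcover := Fin.eq_or_eq_or_eq_of_ne hpq hpr hqr
  set c := b.repr (Y i₀ (b r)) p
  set d := b.repr (Y i₀ (b r)) q
  -- In the new basis `Y i₀ (b r) = c • (b p + (d / c) • b q)`, so `b q` is isolated.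
  have hb' := hb.transvect hpq hwpq (d / c)
  refine decomposableOn_univ_of_isolated hb'.apply_basis q (fun i => ?_) (fun i l => ?_)
  · rw [Basis.transvect_apply, if_neg hpq.symm]
    refine eq_zero_of_forall_weight_ne hb.apply_basis
      (apply_apply_eq_sub_single_smul hb.commute hb.lie (hb.apply_basis q) i) fun k hk => ?_
    rcases hcover k with rfl | rfl | rfl
    · exact he i (by linear_combination hk - hwpq)
    · exact he i (by linear_combination hk)
    · exact Pi.single_one_add_single_one_ne_zero i₀ i (by linear_combination hk + hp - hwpq)
  · by_contra hne
    have hk := hb'.weight_eq_sub_single_of_repr_ne_zero hne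
    rcases hcover l with rfl | rfl | rfl
    · exact he i (by linear_combination hk + hwpq)
    · exact he i (by linear_combination hk)
    · obtain rfl : i = i₀ := Pi.single_one_left_injective (by linear_combination hk - hp + hwpq)
      apply hne
      rw [Basis.repr_transvect_apply, if_pos rfl, Basis.transvect_apply, if_neg hpr.symm]
      change d - d / c * c = 0
      rw [div_mul_cancel₀ d hedge, sub_self]

theorem decomposableOn_univ_of_not_injective (hb : IsWeightBasis H Y b w) {i₀ : ι}
    (hY : Y i₀ ≠ 0) (hw : ¬Function.Injective w) : DecomposableOn H Y Set.univ := by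
  obtain ⟨p, q, hwpq, hpq⟩ := Function.not_injective_iff.1 hw
  obtain ⟨k, l, hkl⟩ := b.exists_repr_ne_zero_of_ne_zero hY
  rcases Fin.eq_or_eq_or_eq_or_eq_of_ne hpq (hb.ne_of_repr_ne_zero hkl) with rfl | rfl | rfl | rfl
  · exact decomposableOn_univ_of_repr_ne_zero_of_target_weight_eq hb hpq hwpq hkl
  · exact decomposableOn_univ_of_repr_ne_zero_of_target_weight_eq hb hpq.symm hwpq.symm hkl
  · exact decomposableOn_univ_of_repr_ne_zero_of_source_weight_eq hb hpq hwpq hkl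
  · exact decomposableOn_univ_of_repr_ne_zero_of_source_weight_eq hb hpq.symm hwpq.symm hkl

end RepeatedWeight

theorem IsWeightBasis.pair_of_connecting_edges {ι : Type*} [DecidableEq ι] {N : ℕ}
    {H Y : ι → End ℂ (Fin N → ℂ)} {b : Basis (Fin 3) ℂ (Fin N → ℂ)} {w : Fin 3 → ι → ℂ}
    (hb : IsWeightBasis H Y b w) (hw : Function.Injective w) {i₀ j : ι} {k₀ l₀ r t : Fin 3}
    (h₀ : b.repr (Y i₀ (b l₀)) k₀ ≠ 0) (hrk : r ≠ k₀) (hrl : r ≠ l₀) (htr : t ≠ r)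
    (hrt : b.repr (Y j (b t)) r ≠ 0 ∨ b.repr (Y j (b r)) t ≠ 0)
    (hdec : DecomposableOn H Y {i₀}) :
    j ≠ i₀ ∧ (∀ θ₁ θ₂ : ℂ, finrank ℂ ↥((H i₀).eigenspace θ₁ ⊓ (H j).eigenspace θ₂) ≤ 1) ∧
      ¬DecomposableOn H Y {i₀, j} ∧ (∀ i, i ≠ i₀ → i ≠ j → Y i = 0) ∧
      (∀ i, i ≠ i₀ → i ≠ j → ∃ c : ℂ, H i = c • 1) := by
  have hkl₀ := hb.ne_of_repr_ne_zero h₀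
  have ht : t = k₀ ∨ t = l₀ := by
    rcases Fin.eq_or_eq_or_eq_of_ne hkl₀ hrk.symm hrl.symm t with h | h | h
    exacts [.inl h, .inr h, absurd h htr]
  -- The edges `k₀ — l₀` of `Y i₀` and `r — t` of `Y j` connect the three basis vectors.
  have hconn {α : Sort _} (f : Fin 3 → α) (hf : f k₀ = f l₀) (hf' : f r = f t) :=
    Fin.apply_eq_of_apply_eq_of_apply_eq f hkl₀ hrk hrl ht hf hf'
  have hflat (i : ι) (hi : i ≠ i₀) (hij : i ≠ j) (u : Fin 3) : w u i = w k₀ i :=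
    hconn (w · i) (hb.weight_apply_eq_of_repr_ne_zero h₀ hi)
      (hrt.elim (hb.weight_apply_eq_of_repr_ne_zero · hij)
        fun h => (hb.weight_apply_eq_of_repr_ne_zero h hij).symm) u
  have hsep {k l : Fin 3} (hi₀ : w k i₀ = w l i₀) (hj : w k j = w l j) : k = l :=
    hw <| funext fun i => by
      by_cases hi : i = i₀
      · exact hi ▸ hi₀
      by_cases hij : i = j
      · exact hij ▸ hj
      rw [hflat i hi hij k, hflat i hi hij l]
  have hpair : ¬DecomposableOn H Y {i₀, j} := by
    intro hdec'
    obtain ⟨s, ⟨a, ha⟩, ⟨c, hc⟩, hs⟩ := hdec'.exists_reduces hb.apply_basis fun k l hkl =>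
      hsep (congrFun hkl ⟨i₀, by simp⟩) (congrFun hkl ⟨j, by simp⟩)
    have hs₀ := hs i₀ (by simp) k₀ l₀ h₀
    have hsj : r ∈ s ↔ t ∈ s :=
      hrt.elim (hs j (by simp) r t) fun h => (hs j (by simp) t r h).symm
    have hmem := hconn (· ∈ s) (propext hs₀) (propext hsj)
    exact hc ((hmem c).symm ▸ (hmem a) ▸ ha)
  have hj : j ≠ i₀ := by
    rintro rfl
    exact hpair (by simpa using hdec)
  refine ⟨hj, fun θ₁ θ₂ => ?_, hpair, fun i hi hij => ?_, fun i hi hij => ?_⟩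
  · exact b.finrank_eigenspace_inf_eigenspace_le_one (fun k => hb.apply_basis k i₀)
      (fun k => hb.apply_basis k j)
      (fun k l hkl => hsep (congrArg Prod.fst hkl) (congrArg Prod.snd hkl)) θ₁ θ₂
  · exact hb.eq_zero_of_weight_apply_eq fun k l => (hflat i hi hij k).trans (hflat i hi hij l).symm
  · exact ⟨w k₀ i, b.ext fun k => by simp [hb.apply_basis, hflat i hi hij k]⟩

theorem statement8_general {m : ℕ} (H Y : Fin (m + 2) → Module.End ℂ (Fin 3 → ℂ))
    (hHH : ∀ i j, Commute (H i) (H j))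
    (hHY : ∀ i j, i ≠ j → Commute (H i) (Y j))
    (hrel : ∀ i, H i * Y i - Y i * H i = -(Y i))
    (hdiag : ∀ i, (⨆ μ : ℂ, Module.End.eigenspace (H i) μ) = ⊤)
    (hY₁ : Y 0 ≠ 0)
    (hindec : ¬ ∃ W₁ W₂ : Submodule ℂ (Fin 3 → ℂ), W₁ ≠ ⊥ ∧ W₂ ≠ ⊥ ∧ IsCompl W₁ W₂ ∧
      (∀ i, InvariantPair (H i) (Y i) W₁) ∧ (∀ i, InvariantPair (H i) (Y i) W₂))
    (hdec₁ : ∃ W₁ W₂ : Submodule ℂ (Fin 3 → ℂ), W₁ ≠ ⊥ ∧ W₂ ≠ ⊥ ∧ IsCompl W₁ W₂ ∧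
      InvariantPair (H 0) (Y 0) W₁ ∧ InvariantPair (H 0) (Y 0) W₂) :
    ∃ j : Fin (m + 2), j ≠ 0 ∧
      (∀ θ₁ θ₂ : ℂ, Module.finrank ℂ
        ↥(Module.End.eigenspace (H 0) θ₁ ⊓ Module.End.eigenspace (H j) θ₂) ≤ 1) ∧
      (¬ ∃ W₁ W₂ : Submodule ℂ (Fin 3 → ℂ), W₁ ≠ ⊥ ∧ W₂ ≠ ⊥ ∧ IsCompl W₁ W₂ ∧
        (InvariantPair (H 0) (Y 0) W₁ ∧ InvariantPair (H j) (Y j) W₁) ∧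
        (InvariantPair (H 0) (Y 0) W₂ ∧ InvariantPair (H j) (Y j) W₂)) ∧
      (∀ i : Fin (m + 2), i ≠ 0 → i ≠ j → Y i = 0) ∧
      (∀ i : Fin (m + 2), i ≠ 0 → i ≠ j →
        ∃ c : ℂ, H i = c • (1 : Module.End ℂ (Fin 3 → ℂ))) := by
  obtain ⟨b, w, hw⟩ : ∃ (b : Basis (Fin 3) ℂ (Fin 3 → ℂ)) (w : Fin 3 → Fin (m + 2) → ℂ),
      ∀ k i, H i (b k) = w k i • b k := by
    obtain ⟨b, w, hw⟩ := End.exists_basis_apply_eq_smul H (fun i j _ => hHH i j) hdiag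
    let e := finCongr (finrank_fin_fun ℂ (n := 3))
    exact ⟨b.reindex e, w ∘ e.symm, fun k i => by simp [hw]⟩
  have hb : IsWeightBasis H Y b w := ⟨hHY, hrel, hw⟩
  have hindec' : ¬DecomposableOn H Y Set.univ := by simpa [DecomposableOn] using hindec
  by_cases hinj : Function.Injective w
  · obtain ⟨k₀, l₀, h₀⟩ := b.exists_repr_ne_zero_of_ne_zero hY₁
    obtain ⟨r, hrk, hrl⟩ := Fin.exists_ne_ne k₀ l₀
    obtain ⟨j, t, htr, hrt⟩ := hb.exists_repr_ne_zero_of_not_decomposableOn hindec' r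
    obtain ⟨hj, hmf, hpair, hY, hH⟩ := hb.pair_of_connecting_edges hinj h₀ hrk hrl htr hrt
      (by simpa [DecomposableOn] using hdec₁)
    exact ⟨j, hj, hmf, by simpa [DecomposableOn] using hpair, hY, hH⟩
  · exact absurd (decomposableOn_univ_of_not_injective hb hY₁ hinj) hindec'

/-- For an indecomposable representation of `𝔟ⁿ` (`n = m + 2 ≥ 2`) on `ℂ³`
with each `H_i` diagonalizable, `Y₁ ≠ 0`, and decomposable restriction to the first factor,
there is an index `j ≠ 0` such that the restriction to `{0, j}` is multiplicity-free and
indecomposable, and all other factors act by scalars (resp. zero). -/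
theorem statement8 {m : ℕ} (H Y : Fin (m + 2) → Module.End ℂ (Fin 3 → ℂ))
    (hHH : ∀ i j, Commute (H i) (H j)) (hYY : ∀ i j, Commute (Y i) (Y j))
    (hHY : ∀ i j, i ≠ j → Commute (H i) (Y j))
    (hrel : ∀ i, H i * Y i - Y i * H i = -(Y i))
    (hdiag : ∀ i, (⨆ μ : ℂ, Module.End.eigenspace (H i) μ) = ⊤)
    (hY₁ : Y 0 ≠ 0)
    (hindec : ¬ ∃ W₁ W₂ : Submodule ℂ (Fin 3 → ℂ), W₁ ≠ ⊥ ∧ W₂ ≠ ⊥ ∧ IsCompl W₁ W₂ ∧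
      (∀ i, InvariantPair (H i) (Y i) W₁) ∧ (∀ i, InvariantPair (H i) (Y i) W₂))
    (hdec₁ : ∃ W₁ W₂ : Submodule ℂ (Fin 3 → ℂ), W₁ ≠ ⊥ ∧ W₂ ≠ ⊥ ∧ IsCompl W₁ W₂ ∧
      InvariantPair (H 0) (Y 0) W₁ ∧ InvariantPair (H 0) (Y 0) W₂) :
    ∃ j : Fin (m + 2), j ≠ 0 ∧
      (∀ θ₁ θ₂ : ℂ, Module.finrank ℂ
        ↥(Module.End.eigenspace (H 0) θ₁ ⊓ Module.End.eigenspace (H j) θ₂) ≤ 1) ∧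
      (¬ ∃ W₁ W₂ : Submodule ℂ (Fin 3 → ℂ), W₁ ≠ ⊥ ∧ W₂ ≠ ⊥ ∧ IsCompl W₁ W₂ ∧
        (InvariantPair (H 0) (Y 0) W₁ ∧ InvariantPair (H j) (Y j) W₁) ∧
        (InvariantPair (H 0) (Y 0) W₂ ∧ InvariantPair (H j) (Y j) W₂)) ∧
      (∀ i : Fin (m + 2), i ≠ 0 → i ≠ j → Y i = 0) ∧
      (∀ i : Fin (m + 2), i ≠ 0 → i ≠ j →
        ∃ c : ℂ, H i = c • (1 : Module.End ℂ (Fin 3 → ℂ))) :=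
  statement8_general H Y hHH hHY hrel hdiag hY₁ hindec hdec₁
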